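/- Let u, e : ℝ → ℝ³ satisfy u_x = q¹ e + q² (u × e) and e_x = -q¹ u with |u| = |e| = 1, ⟨u,e⟩ = 0, and u_x ≠ 0. Writing q¹ = |u_x| cos ω and q² = |u_x| sin ω for a differentiable ω : ℝ → ℝ, the condition ⟨e_x, u × e⟩ = 0 implies ω_x = ⟨u × u_x, u_xx⟩ / |u_x|². -/

import Mathlib

open scoped RealInnerProductSpace

noncomputable def cross3 (a b : EuclideanSpace ℝ (Fin 3)) : EuclideanSpace ℝ (Fin 3) :=
  (EuclideanSpace.equiv (Fin 3) ℝ).symm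
    (crossProduct ((EuclideanSpace.equiv (Fin 3) ℝ) a) ((EuclideanSpace.equiv (Fin 3) ℝ) b))

/-!
Write `q1 = ⟪u_x, e⟫` and `q2 = ⟪u_x, u × e⟫`. Since `e_x` is parallel to `u` and `u_x ⟂ u`,
differentiating gives `q1' = ⟪u_xx, e⟫` and `q2' = ⟪u_xx, u × e⟫`. On the other hand
`u × u_x = q1 (u × e) - q2 e`, so `⟪u × u_x, u_xx⟫ = q1 q2' - q2 q1'`, and for the polar
coordinates `(q1, q2) = |u_x| (cos ω, sin ω)` this Wronskian is `|u_x|² ω_x`.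
-/

open scoped Matrix
open WithLp

local notation "E3" => EuclideanSpace ℝ (Fin 3)

section CrossProduct

lemma real_inner_eq_dotProduct (a b : E3) : ⟪a, b⟫ = ofLp a ⬝ᵥ ofLp b := by
  rw [EuclideanSpace.inner_eq_star_dotProduct, star_trivial, dotProduct_comm]

lemma ofLp_cross3 (a b : E3) : ofLp (cross3 a b) = ofLp a ⨯₃ ofLp b := rfl

lemma real_inner_self_cross3 (a b : E3) : ⟪a, cross3 a b⟫ = 0 := by
  rw [real_inner_eq_dotProduct, ofLp_cross3, dot_self_cross]

lemma real_inner_cross3_self (a b : E3) : ⟪b, cross3 a b⟫ = 0 := by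
  rw [real_inner_eq_dotProduct, ofLp_cross3, dot_cross_self]

lemma real_inner_cross3_cross3 (a b c d : E3) :
    ⟪cross3 a b, cross3 c d⟫ = ⟪a, c⟫ * ⟪b, d⟫ - ⟪a, d⟫ * ⟪b, c⟫ := by
  simp only [real_inner_eq_dotProduct, ofLp_cross3, cross_dot_cross]

lemma cross3_cross3 (a b c : E3) : cross3 a (cross3 b c) = ⟪a, c⟫ • b - ⟪a, b⟫ • c := by
  apply (WithLp.linearEquiv 2 ℝ (Fin 3 → ℝ)).injective
  simp [ofLp_cross3, cross_cross_eq_smul_sub_smul', real_inner_eq_dotProduct, dotProduct_comm]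

noncomputable def cross3CLM : E3 →L[ℝ] E3 →L[ℝ] E3 :=
  LinearMap.toContinuousLinearMap <|
    (LinearMap.toContinuousLinearMap : (E3 →ₗ[ℝ] E3) ≃ₗ[ℝ] _).toLinearMap ∘ₗ
      (crossProduct.compl₁₂ (EuclideanSpace.equiv (Fin 3) ℝ).toLinearMap
        (EuclideanSpace.equiv (Fin 3) ℝ).toLinearMap).compr₂
          (EuclideanSpace.equiv (Fin 3) ℝ).symm.toLinearMap

lemma cross3CLM_apply (a b : E3) : cross3CLM a b = cross3 a b := rfl

lemma cross3_self (a : E3) : cross3 a a = 0 := by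
  apply (WithLp.linearEquiv 2 ℝ (Fin 3 → ℝ)).injective
  simp [ofLp_cross3]

lemma cross3_smul_self (a : E3) (t : ℝ) : cross3 a (t • a) = 0 := by
  rw [← cross3CLM_apply, map_smul, cross3CLM_apply, cross3_self, smul_zero]

lemma cross3_add_smul (a b c : E3) (s t : ℝ) :
    cross3 a (s • b + t • c) = s • cross3 a b + t • cross3 a c := by
  simp only [← cross3CLM_apply, map_add, map_smul]

theorem HasDerivAt.cross3 {f g : ℝ → E3} {f' g' : E3} {x : ℝ}
    (hf : HasDerivAt f f' x) (hg : HasDerivAt g g' x) :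
    HasDerivAt (fun t ↦ cross3 (f t) (g t)) (cross3 (f x) g' + cross3 f' (g x)) x :=
  cross3CLM.hasDerivAt_of_bilinear (fun _ ↦ hf) (fun _ ↦ hg)

end CrossProduct

section Frame

variable {u e : E3} {q1 q2 : ℝ}

lemma inner_frame_combination_e (he : ‖e‖ = 1) : ⟪q1 • e + q2 • cross3 u e, e⟫ = q1 := by
  rw [inner_add_left, real_inner_smul_left, real_inner_smul_left, real_inner_self_eq_norm_sq,
    he, real_inner_comm, real_inner_cross3_self]
  ring

lemma inner_frame_combination_cross3 (hu : ‖u‖ = 1) (he : ‖e‖ = 1) (hue : ⟪u, e⟫ = 0) :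
    ⟪q1 • e + q2 • cross3 u e, cross3 u e⟫ = q2 := by
  rw [inner_add_left, real_inner_smul_left, real_inner_smul_left, real_inner_cross3_self,
    real_inner_cross3_cross3, real_inner_self_eq_norm_sq, real_inner_self_eq_norm_sq, hu, he, hue]
  ring

lemma inner_frame_combination_u (hue : ⟪u, e⟫ = 0) : ⟪q1 • e + q2 • cross3 u e, u⟫ = 0 := by
  rw [inner_add_left, real_inner_smul_left, real_inner_smul_left, real_inner_comm, hue,
    real_inner_comm, real_inner_self_cross3]
  ring

lemma cross3_frame_combination (hu : ‖u‖ = 1) (hue : ⟪u, e⟫ = 0) :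
    cross3 u (q1 • e + q2 • cross3 u e) = q1 • cross3 u e - q2 • e := by
  rw [cross3_add_smul, cross3_cross3, hue, real_inner_self_eq_norm_sq, hu]
  module

end Frame

section FrameSystem

variable {u e : ℝ → E3} {q1 q2 : ℝ → ℝ} {x : ℝ} {u'' : E3}

theorem hasDerivAt_coeff_e
    (hux : ∀ y, deriv u y = q1 y • e y + q2 y • cross3 (u y) (e y))
    (hen : ∀ y, ‖e y‖ = 1) (hue : ⟪u x, e x⟫ = 0)
    (hu'' : HasDerivAt (deriv u) u'' x) (he : HasDerivAt e (-(q1 x) • u x) x) :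
    HasDerivAt q1 ⟪u'', e x⟫ x := by
  have hq1 : q1 = fun y ↦ ⟪deriv u y, e y⟫ := by
    funext y
    rw [hux y, inner_frame_combination_e (hen y)]
  have h := hu''.inner ℝ he
  rwa [real_inner_smul_right, hux x, inner_frame_combination_u hue, mul_zero, zero_add,
    ← hq1] at h

theorem hasDerivAt_coeff_cross3
    (hux : ∀ y, deriv u y = q1 y • e y + q2 y • cross3 (u y) (e y))
    (hun : ∀ y, ‖u y‖ = 1) (hen : ∀ y, ‖e y‖ = 1) (hue : ∀ y, ⟪u y, e y⟫ = 0)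
    (hu : HasDerivAt u (deriv u x) x) (hu'' : HasDerivAt (deriv u) u'' x)
    (he : HasDerivAt e (-(q1 x) • u x) x) :
    HasDerivAt q2 ⟪u'', cross3 (u x) (e x)⟫ x := by
  have hq2 : q2 = fun y ↦ ⟪deriv u y, cross3 (u y) (e y)⟫ := by
    funext y
    rw [hux y, inner_frame_combination_cross3 (hun y) (hen y) (hue y)]
  have h := hu''.inner ℝ (hu.cross3 he)
  rwa [cross3_smul_self, zero_add, real_inner_self_cross3, zero_add, ← hq2] at h

end FrameSystem

theorem polar_angle_deriv_mul_sq {r q1 q2 ω : ℝ → ℝ} {x a b ω' : ℝ}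
    (h1 : HasDerivAt q1 a x) (h2 : HasDerivAt q2 b x) (hω : HasDerivAt ω ω' x)
    (hq1 : ∀ y, q1 y = r y * Real.cos (ω y)) (hq2 : ∀ y, q2 y = r y * Real.sin (ω y)) :
    ω' * r x ^ 2 = q1 x * b - q2 x * a := by
  have hzero : (fun y ↦ q2 y * Real.cos (ω y) - q1 y * Real.sin (ω y)) = fun _ ↦ 0 := by
    funext y
    rw [hq1, hq2]
    ring
  have hG : HasDerivAt (fun y ↦ q2 y * Real.cos (ω y) - q1 y * Real.sin (ω y))
      (b * Real.cos (ω x) + q2 x * (-Real.sin (ω x) * ω')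
        - (a * Real.sin (ω x) + q1 x * (Real.cos (ω x) * ω'))) x :=
    (h2.mul hω.cos).sub (h1.mul hω.sin)
  rw [hzero] at hG
  have key := hG.unique (hasDerivAt_const x 0)
  rw [hq1, hq2] at key ⊢
  linear_combination (-r x) * key - ω' * r x ^ 2 * Real.sin_sq_add_cos_sq (ω x)

theorem angle_derivative_is_torsion_general
    (u e : ℝ → EuclideanSpace ℝ (Fin 3))
    (hu : ContDiff ℝ 2 u) (he : Differentiable ℝ e)
    (q1 q2 : ℝ → ℝ)
    (hux : ∀ x, deriv u x = q1 x • e x + q2 x • cross3 (u x) (e x))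
    (hex : ∀ x, deriv e x = -(q1 x) • u x)
    (hun : ∀ x, ‖u x‖ = 1) (hen : ∀ x, ‖e x‖ = 1) (hue : ∀ x, ⟪u x, e x⟫ = 0)
    (huxne : ∀ x, deriv u x ≠ 0)
    (ω : ℝ → ℝ) (hω : Differentiable ℝ ω)
    (hq1 : ∀ x, q1 x = ‖deriv u x‖ * Real.cos (ω x))
    (hq2 : ∀ x, q2 x = ‖deriv u x‖ * Real.sin (ω x)) :
    ∀ x, deriv ω x =
      ⟪cross3 (u x) (deriv u x), deriv (deriv u) x⟫ / ‖deriv u x‖ ^ 2 := by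
  intro x
  have hu' : HasDerivAt u (deriv u x) x := (hu.differentiable (by norm_num) x).hasDerivAt
  have hu'' : HasDerivAt (deriv u) (deriv (deriv u) x) x :=
    (hu.differentiable_deriv_two x).hasDerivAt
  have he' : HasDerivAt e (-(q1 x) • u x) x := hex x ▸ (he x).hasDerivAt
  have key := polar_angle_deriv_mul_sq
    (hasDerivAt_coeff_e hux hen (hue x) hu'' he')
    (hasDerivAt_coeff_cross3 hux hun hen hue hu' hu'' he') (hω x).hasDerivAt hq1 hq2
  have hnorm : ‖deriv u x‖ ^ 2 ≠ 0 := pow_ne_zero 2 (norm_ne_zero_iff.mpr (huxne x))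
  rw [eq_div_iff hnorm, key, hux x, cross3_frame_combination (hun x) (hue x), inner_sub_left,
    real_inner_smul_left, real_inner_smul_left, real_inner_comm (e x),
    real_inner_comm (cross3 (u x) (e x))]

theorem angle_derivative_is_torsion
    (u e : ℝ → EuclideanSpace ℝ (Fin 3))
    (hu : ContDiff ℝ 2 u) (he : Differentiable ℝ e)
    (q1 q2 : ℝ → ℝ)
    (hux : ∀ x, deriv u x = q1 x • e x + q2 x • cross3 (u x) (e x))
    (hex : ∀ x, deriv e x = -(q1 x) • u x)
    (hun : ∀ x, ‖u x‖ = 1) (hen : ∀ x, ‖e x‖ = 1) (hue : ∀ x, ⟪u x, e x⟫ = 0)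
    (huxne : ∀ x, deriv u x ≠ 0)
    (ω : ℝ → ℝ) (hω : Differentiable ℝ ω)
    (hq1 : ∀ x, q1 x = ‖deriv u x‖ * Real.cos (ω x))
    (hq2 : ∀ x, q2 x = ‖deriv u x‖ * Real.sin (ω x))
    (horth : ∀ x, ⟪deriv e x, cross3 (u x) (e x)⟫ = 0) :
    ∀ x, deriv ω x =
      ⟪cross3 (u x) (deriv u x), deriv (deriv u) x⟫ / ‖deriv u x‖ ^ 2 :=
  angle_derivative_is_torsion_general u e hu he q1 q2 hux hex hun hen hue huxne ω hω hq1 hq2
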